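/- arXiv:1003.1254 — 3 statements merged into one kernel-verified Lean document; each statement's English description precedes it below -/
import Mathlib

section
/- Let S(t) = Σ_{i≥0} c_i t^i be a formal power series over Q. Suppose that for two positive integers p and q there are polynomials P_p and P_q with Σ_{i=0}^{pn-1} c_i = P_p(n) and Σ_{i=0}^{qn-1} c_i = P_q(n) for all n ≥ 1. Then P_p(0) = P_q(0). -/
/-- Well-definedness of the periodic constant: if for two positive integers `p, q`
the partial sums `Σ_{i=0}^{pn-1} c_i` resp. `Σ_{i=0}^{qn-1} c_i` of a power series
`Σ c_i t^i` are given, for all `n ≥ 1`, by polynomials `P_p` resp. `P_q`, then the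
constant terms agree: `P_p(0) = P_q(0)`. -/
theorem periodic_constant_well_defined
    (c : ℕ → ℚ) (p q : ℕ) (hp : 0 < p) (hq : 0 < q)
    (Pp Pq : Polynomial ℚ)
    (hPp : ∀ n : ℕ, 1 ≤ n → ∑ i ∈ Finset.range (p * n), c i = Pp.eval (n : ℚ))
    (hPq : ∀ n : ℕ, 1 ≤ n → ∑ i ∈ Finset.range (q * n), c i = Pq.eval (n : ℚ)) :
    Pp.eval 0 = Pq.eval 0 := by
  set A := Pp.comp (Polynomial.C (q : ℚ) * Polynomial.X) with hA
  set B := Pq.comp (Polynomial.C (p : ℚ) * Polynomial.X) with hB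
  have key : ∀ n : ℕ, 1 ≤ n → A.eval (n : ℚ) = B.eval (n : ℚ) := by
    intro n hn
    have h1 : A.eval (n : ℚ) = Pp.eval ((q * n : ℕ) : ℚ) := by
      simp [hA, Polynomial.eval_comp]
    have h2 : B.eval (n : ℚ) = Pq.eval ((p * n : ℕ) : ℚ) := by
      simp [hB, Polynomial.eval_comp]
    rw [h1, h2, ← hPp (q * n) (le_trans hn (Nat.le_mul_of_pos_left n hq)),
        ← hPq (p * n) (le_trans hn (Nat.le_mul_of_pos_left n hp))]
    rw [show p * (q * n) = q * (p * n) by ring]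
  have hAB : A = B := by
    apply Polynomial.eq_of_infinite_eval_eq
    have himg : ((fun n : ℕ => (n : ℚ)) '' Set.Ici 1).Infinite :=
      Set.Infinite.image (fun a _ b _ h => by exact_mod_cast h) (Set.Ici_infinite 1)
    exact himg.mono (by rintro x ⟨n, hn, rfl⟩; exact key n hn)
  have h0A : A.eval 0 = Pp.eval 0 := by simp [hA, Polynomial.eval_comp]
  have h0B : B.eval 0 = Pq.eval 0 := by simp [hB, Polynomial.eval_comp]
  rw [← h0A, ← h0B, hAB]
end

section
/- Let Γ be a connected negative definite plumbing tree with intersection form I, canonical class K, weight function w(k) = -(k² + |V|)/8 on Char, and cube weights w((k,I')) = max_{J⊂I'} w(k + 2Σ_{j∈J} E_j). Then the identity of formal power series holds: Π_{v∈V} (1 - t^{E_v^*})^{δ_v - 2} = Σ_{k ∈ Char} Σ_{I' ⊂ V} (-1)^{|I'|+1} w((k, I')) · t^{(k-K)/2}, where δ_v is the valency of v in Γ and t^{l'} denotes the multivariable monomial with exponent l' ∈ L'. -/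
open scoped BigOperators Matrix

def intMatQ {s : ℕ} (M : Matrix (Fin s) (Fin s) ℤ) : Matrix (Fin s) (Fin s) ℚ :=
  M.map fun m => (m : ℚ)

/-- The bilinear pairing `(x, y) = xᵀ M y` over `ℚ`. -/
def pairing {s : ℕ} (M : Matrix (Fin s) (Fin s) ℤ) (x y : Fin s → ℚ) : ℚ :=
  x ⬝ᵥ (intMatQ M).mulVec y

def NegDefinite {s : ℕ} (M : Matrix (Fin s) (Fin s) ℤ) : Prop :=
  ∀ x : Fin s → ℚ, x ≠ 0 → pairing M x x < 0

def baseE {s : ℕ} (v : Fin s) : Fin s → ℚ := Pi.single v 1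

/-- `Estar v` is the antidual basis: `(E_v^*, E_w) = -δ_{vw}`. -/
def IsAntidual {s : ℕ} (M : Matrix (Fin s) (Fin s) ℤ) (Estar : Fin s → Fin s → ℚ) : Prop :=
  ∀ v w, pairing M (Estar v) (baseE w) = if v = w then -1 else 0

def IsPlumbing {s : ℕ} (M : Matrix (Fin s) (Fin s) ℤ) : Prop :=
  M.IsSymm ∧ NegDefinite M ∧ (∀ v w, v ≠ w → M v w = 0 ∨ M v w = 1) ∧
    (SimpleGraph.fromRel fun v w => M v w = 1).Connected

/-- valency of a vertex -/
def valency {s : ℕ} (M : Matrix (Fin s) (Fin s) ℤ) (v : Fin s) : ℕ :=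
  (Finset.univ.filter fun w => w ≠ v ∧ M v w = 1).card

def IsPlumbingTree {s : ℕ} (M : Matrix (Fin s) (Fin s) ℤ) : Prop :=
  IsPlumbing M ∧ ∑ v, valency M v = 2 * (s - 1)

/-- characteristic element -/
def IsChar {s : ℕ} (M : Matrix (Fin s) (Fin s) ℤ) (k : Fin s → ℚ) : Prop :=
  (∀ v, ∃ m : ℤ, pairing M k (baseE v) = m) ∧
  ∀ l : Fin s → ℤ, ∃ m : ℤ, pairing M (k + fun v => (l v : ℚ)) (fun v => (l v : ℚ)) = 2 * m

/-- canonical class by adjunction -/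
def IsCanonical {s : ℕ} (M : Matrix (Fin s) (Fin s) ℤ) (K : Fin s → ℚ) : Prop :=
  ∀ v, pairing M (K + baseE v) (baseE v) = -2

/-- the weight function w(k) = -(k² + s)/8 -/
def wfun {s : ℕ} (M : Matrix (Fin s) (Fin s) ℤ) (k : Fin s → ℚ) : ℚ :=
  -(pairing M k k + s) / 8

/-- the weight of the cube (k, I'). -/
def cubeW {s : ℕ} (M : Matrix (Fin s) (Fin s) ℤ) (k : Fin s → ℚ) (I' : Finset (Fin s)) : ℚ :=
  I'.powerset.sup' (Finset.powerset_nonempty I') fun J => wfun M (k + 2 • ∑ j ∈ J, baseE j)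

/-- Σ_{I'⊂V} (-1)^{|I'|+1} w((k,I')) -/
def cubeSum {s : ℕ} (M : Matrix (Fin s) (Fin s) ℤ) (k : Fin s → ℚ) : ℚ :=
  ∑ I' ∈ Finset.univ.powerset, (-1 : ℚ) ^ (I'.card + 1) * cubeW M k I'

/-!
Write `k = K + 2 ∑ a_v E_v^*`. Adjunction and antiduality give `(k, E_v) = -2 - E_v² - 2 a_v`, so
`w(k + 2 E_J) - w(k) = |J| + ∑_{v ∈ J} a_v - e(J)`, where `e(J)` counts the edges inside `J`, and
the constant `w(k)` cancels from the alternating sum over cubes. Removing a leaf `x` of the tree,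
attached to `u`, the alternating sum `S` satisfies `S(a) = [a_x ≥ 0] (S'(a) - S'(a - e_u))` with
`S'` the sum for the smaller tree: this is the recursion of the coefficients of
`∏_v (1 - x_v)^{δ_v - 2}` coming from `(1 - x)^{d - 1} = (1 - x)^{d - 2} (1 - x)`. A single vertex
gives `max(0, a + 1)`, the coefficient of `xᵃ` in `(1 - x)^{-2}`.
-/

open Finset

/-- The coefficient of `xⁿ` in `(1 - x) ^ (d - 2)`, extended by `0` to `n < 0`. -/
def zetaCoeff : ℕ → ℤ → ℚ
  | 0, n => max 0 (n + 1)
  | d + 1, n => zetaCoeff d n - zetaCoeff d (n - 1)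

lemma zetaCoeff_succ (d : ℕ) (n : ℤ) :
    zetaCoeff (d + 1) n = zetaCoeff d n - zetaCoeff d (n - 1) := rfl

lemma zetaCoeff_of_neg (d : ℕ) {n : ℤ} (hn : n < 0) : zetaCoeff d n = 0 := by
  induction d generalizing n with
  | zero => exact max_eq_left (by exact_mod_cast hn)
  | succ d ih => rw [zetaCoeff_succ, ih hn, ih (by omega), sub_zero]

lemma zetaCoeff_one_of_nonneg {n : ℤ} (hn : 0 ≤ n) : zetaCoeff 1 n = 1 := by
  have hn' : (0 : ℚ) ≤ n := by exact_mod_cast hn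
  rw [zetaCoeff_succ, zetaCoeff, zetaCoeff, max_eq_right (by linarith),
    max_eq_right (by push_cast; linarith)]
  push_cast
  ring

lemma zetaCoeff_two (n : ℤ) : zetaCoeff 2 n = if n = 0 then 1 else 0 := by
  rw [zetaCoeff_succ]
  rcases lt_trichotomy n 0 with hn | rfl | hn
  · rw [zetaCoeff_of_neg 1 hn, zetaCoeff_of_neg 1 (by omega), if_neg hn.ne, sub_zero]
  · rw [zetaCoeff_one_of_nonneg le_rfl, zetaCoeff_of_neg 1 (by norm_num), if_pos rfl, sub_zero]
  · rw [zetaCoeff_one_of_nonneg hn.le, zetaCoeff_one_of_nonneg (by omega), if_neg hn.ne', sub_self]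

lemma prod_zetaCoeff_eq_ite {ι : Type*} [Fintype ι] (d : ι → ℕ) (a : ι → ℤ)
    [Decidable (∀ v, 0 ≤ a v)] :
    ∏ v, zetaCoeff (d v) (a v) =
      if ∀ v, 0 ≤ a v then ∏ v, zetaCoeff (d v) ((a v).toNat : ℤ) else 0 := by
  split_ifs with ha
  · exact prod_congr rfl fun v _ => by rw [Int.toNat_of_nonneg (ha v)]
  · obtain ⟨v, hv⟩ := not_forall.1 ha
    exact prod_eq_zero (mem_univ v) (zetaCoeff_of_neg _ (not_le.1 hv))

lemma prod_zetaCoeff_add_ite_eq_sub {V : Type*} [DecidableEq V] {U : Finset V} {u : V}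
    (hu : u ∈ U) (d : V → ℕ) (a : V → ℤ) :
    ∏ v ∈ U, zetaCoeff (d v + if v = u then 1 else 0) (a v) =
      ∏ v ∈ U, zetaCoeff (d v) (a v) -
        ∏ v ∈ U, zetaCoeff (d v) ((a - Pi.single u 1 : V → ℤ) v) := by
  have h₁ : ∏ v ∈ U.erase u, zetaCoeff (d v + if v = u then 1 else 0) (a v) =
      ∏ v ∈ U.erase u, zetaCoeff (d v) (a v) :=
    prod_congr rfl fun v hv => by rw [if_neg (ne_of_mem_erase hv), add_zero]
  have h₂ : ∏ v ∈ U.erase u, zetaCoeff (d v) ((a - Pi.single u 1 : V → ℤ) v) =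
      ∏ v ∈ U.erase u, zetaCoeff (d v) (a v) :=
    prod_congr rfl fun v hv => by
      rw [Pi.sub_apply, Pi.single_eq_of_ne (ne_of_mem_erase hv), sub_zero]
  rw [← mul_prod_erase U _ hu, ← mul_prod_erase U _ hu, ← mul_prod_erase U _ hu, h₁, h₂, if_pos rfl,
    Pi.sub_apply, Pi.single_eq_same, zetaCoeff_succ]
  ring

section PowerSeries
open PowerSeries

noncomputable def zetaFactor (d : ℕ) : PowerSeries ℚ := mk fun n => zetaCoeff d n

lemma zetaFactor_succ (d : ℕ) : zetaFactor (d + 1) = zetaFactor d * (1 - X) := by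
  ext (_ | n)
  · simp [zetaFactor, mul_sub, zetaCoeff_succ, zetaCoeff_of_neg]
  · simp [zetaFactor, mul_sub, zetaCoeff_succ, coeff_succ_mul_X]

lemma zetaFactor_two : zetaFactor 2 = 1 := by
  ext n
  simp [zetaFactor, zetaCoeff_two, coeff_one]

lemma zetaFactor_mul_one_sub_X_sq (d : ℕ) : zetaFactor d * (1 - X) ^ 2 = (1 - X) ^ d := by
  induction d with
  | zero => rw [sq, ← mul_assoc, ← zetaFactor_succ, ← zetaFactor_succ, zetaFactor_two, pow_zero]
  | succ d ih => rw [zetaFactor_succ, mul_right_comm, ih, pow_succ]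

end PowerSeries

section Rename
open MvPowerSeries Function

variable {σ R : Type*} [CommSemiring R]

lemma coeff_single_rename_punit (v : σ) (p : PowerSeries R) (k : ℕ) :
    coeff (Finsupp.single v k) (rename (Embedding.punit v) p) = PowerSeries.coeff k p := by
  have h := coeff_embDomain_rename (Embedding.punit v) p (Finsupp.single PUnit.unit k)
  rwa [Finsupp.embDomain_single] at h

lemma coeff_rename_punit_eq_zero {v : σ} {x : σ →₀ ℕ} (hx : ∀ k, x ≠ Finsupp.single v k)
    (p : PowerSeries R) : coeff x (rename (Embedding.punit v) p) = 0 := by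
  refine coeff_rename_eq_zero _ _ ?_
  rintro ⟨y, rfl⟩
  refine hx (y PUnit.unit) ?_
  conv_lhs => rw [Finsupp.unique_single y, Finsupp.mapDomain_single]
  rfl

lemma coeff_prod_rename_punit [Fintype σ] [DecidableEq σ] (f : σ → PowerSeries R) (n : σ →₀ ℕ) :
    coeff n (∏ v, rename (Embedding.punit v) (f v)) = ∏ v, PowerSeries.coeff (n v) (f v) := by
  let l₀ : σ →₀ σ →₀ ℕ := Finsupp.equivFunOnFinite.symm fun v => Finsupp.single v (n v)
  have hl₀ : l₀ ∈ univ.finsuppAntidiag n := by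
    refine mem_finsuppAntidiag.2 ⟨?_, subset_univ _⟩
    ext w
    simp [l₀]
  rw [coeff_prod, sum_eq_single_of_mem l₀ hl₀ ?_]
  · exact prod_congr rfl fun v _ => coeff_single_rename_punit v (f v) (n v)
  intro l hl hne
  obtain ⟨v, hv⟩ : ∃ v, ∀ k, l v ≠ Finsupp.single v k := by
    by_contra! hsingle
    choose m hm using hsingle
    have hmn : ∀ w, m w = n w := fun w => by
      rw [← (mem_finsuppAntidiag.1 hl).1, Finsupp.finsetSum_apply, sum_eq_single w]
      · simp [hm]
      · intro v _ hvw; simp [hm, hvw]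
      · simp
    exact hne (Finsupp.ext fun v => by simp [l₀, hm, hmn])
  exact prod_eq_zero (mem_univ v) (coeff_rename_punit_eq_zero hv _)

end Rename

open MvPowerSeries Function in
lemma eq_prod_rename_zetaFactor {σ : Type*} [Fintype σ] (d : σ → ℕ) {Z : MvPowerSeries σ ℚ}
    (hZ : Z * ∏ v, (1 - X v) ^ 2 = ∏ v, (1 - X v) ^ d v) :
    Z = ∏ v, rename (Embedding.punit v) (zetaFactor (d v)) := by
  have hunit : IsUnit (∏ v, (1 - X v : MvPowerSeries σ ℚ) ^ 2) := by
    rw [isUnit_iff_constantCoeff]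
    simp
  rw [← hunit.mul_left_inj, hZ, ← prod_mul_distrib]
  refine prod_congr rfl fun v _ => ?_
  have hX : rename (Embedding.punit v) (PowerSeries.X : PowerSeries ℚ) = X v := rename_X _ _
  rw [← hX, ← map_one (rename (Embedding.punit v)), ← map_sub, ← map_pow, ← map_pow, ← map_mul,
    zetaFactor_mul_one_sub_X_sq]

lemma sum_powerset_neg_one_pow_card_add_one {α : Type*} {U : Finset α} (hU : U.Nonempty) :
    ∑ I ∈ U.powerset, (-1 : ℚ) ^ (#I + 1) = 0 := by
  have h : ∑ I ∈ U.powerset, (-1 : ℚ) ^ #I = 0 := by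
    exact_mod_cast sum_powerset_neg_one_pow_card_of_nonempty hU
  simp_rw [pow_succ, ← sum_mul, h, zero_mul]

namespace SimpleGraph

variable {V : Type*} (G : SimpleGraph V) [DecidableRel G.Adj]

def degreeIn (U : Finset V) (v : V) : ℕ := #{w ∈ U | G.Adj v w}

/-- For `k = K + 2 ∑ a_v E_v^*`, this is `w(k + 2 ∑_{j ∈ J} E_j) - w(k)`; the last term is the
number of edges of `G` inside `J`. -/
def cubeIncrement (a : V → ℤ) (J : Finset V) : ℚ :=
  #J + ∑ v ∈ J, (a v : ℚ) - (∑ v ∈ J, G.degreeIn J v : ℕ) / 2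

def cubeMaxIncrement (a : V → ℤ) (I : Finset V) : ℚ :=
  I.powerset.sup' I.powerset_nonempty (G.cubeIncrement a)

def altCubeSum (a : V → ℤ) (U : Finset V) : ℚ :=
  ∑ I ∈ U.powerset, (-1) ^ (#I + 1) * G.cubeMaxIncrement a I

section Accreted

variable [DecidableEq V]

inductive Accreted : Finset V → Prop
  | singleton (v : V) : Accreted {v}
  | insert_adj {U : Finset V} {x : V} :
      Accreted U → x ∉ U → 0 < G.degreeIn U x → Accreted (insert x U)

variable {G} {U : Finset V} {x : V}

lemma degreeIn_insert (hx : x ∉ U) (v : V) :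
    G.degreeIn (insert x U) v = G.degreeIn U v + if G.Adj v x then 1 else 0 := by
  unfold degreeIn
  rw [filter_insert]
  split_ifs
  · rw [card_insert_of_notMem fun hmem => hx (mem_filter.1 hmem).1]
  · rfl

lemma degreeIn_insert_self (hx : x ∉ U) : G.degreeIn (insert x U) x = G.degreeIn U x := by
  rw [degreeIn_insert hx, if_neg G.irrefl, add_zero]

lemma sum_degreeIn_insert (hx : x ∉ U) :
    ∑ v ∈ insert x U, G.degreeIn (insert x U) v = ∑ v ∈ U, G.degreeIn U v + 2 * G.degreeIn U x := by
  have hback : ∑ v ∈ U, (if G.Adj v x then 1 else 0) = G.degreeIn U x := by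
    simp_rw [sum_boole, degreeIn, G.adj_comm, Nat.cast_id]
  rw [sum_insert hx, degreeIn_insert_self hx, sum_congr rfl fun v _ => degreeIn_insert hx v,
    sum_add_distrib, hback]
  ring

lemma degreeIn_of_subset_of_unique_adj {J : Finset V} {u : V} (hxu : ∀ w ∈ U, G.Adj x w ↔ w = u)
    (hJ : J ⊆ U) : G.degreeIn J x = if u ∈ J then 1 else 0 := by
  unfold degreeIn
  rw [filter_congr fun w hw => hxu w (hJ hw), filter_eq']
  split_ifs <;> rfl

lemma Accreted.nonempty (hU : G.Accreted U) : U.Nonempty := by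
  cases hU with
  | singleton v => exact singleton_nonempty v
  | insert_adj => exact insert_nonempty _ _

lemma Accreted.two_mul_card_sub_one_le (hU : G.Accreted U) :
    2 * (#U - 1) ≤ ∑ v ∈ U, G.degreeIn U v := by
  induction hU with
  | singleton v => simp
  | @insert_adj U x hU hx hpos ih =>
    rw [sum_degreeIn_insert hx, card_insert_of_notMem hx]
    omega

lemma Accreted.degreeIn_eq_one_of_sum_eq (hU : G.Accreted U) (hx : x ∉ U)
    (hpos : 0 < G.degreeIn U x)
    (h : ∑ v ∈ insert x U, G.degreeIn (insert x U) v = 2 * (#(insert x U) - 1)) :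
    G.degreeIn U x = 1 ∧ ∑ v ∈ U, G.degreeIn U v = 2 * (#U - 1) := by
  rw [sum_degreeIn_insert hx, card_insert_of_notMem hx] at h
  have := hU.two_mul_card_sub_one_le
  have := hU.nonempty.card_pos
  omega

lemma Connected.accreted_univ [Fintype V] (hG : G.Connected) : G.Accreted univ := by
  classical
  have : Nonempty V := hG.nonempty
  obtain ⟨U, hU, hmax⟩ := exists_max_image {U ∈ univ.powerset | G.Accreted U} card
    ⟨{Classical.arbitrary V}, mem_filter.2 ⟨mem_powerset.2 (subset_univ _), .singleton _⟩⟩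
  replace hU := (mem_filter.1 hU).2
  suffices U = univ by rwa [this] at hU
  by_contra hne
  obtain ⟨w, -, hw⟩ := exists_of_ssubset (ssubset_univ_iff.2 hne)
  obtain ⟨u, hu⟩ := hU.nonempty
  obtain ⟨d, -, hdU, hdU'⟩ := (hG.preconnected u w).some.exists_boundary_dart U hu hw
  have hins : G.Accreted (insert d.snd U) :=
    .insert_adj hU hdU' (card_pos.2 ⟨d.fst, mem_filter.2 ⟨hdU, d.adj.symm⟩⟩)
  have := hmax _ (mem_filter.2 ⟨mem_powerset.2 (subset_univ _), hins⟩)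
  rw [card_insert_of_notMem hdU'] at this
  omega

end Accreted

variable {G} [DecidableEq V] {U I J : Finset V} {x u : V} (a : V → ℤ)

lemma cubeIncrement_sub_single :
    G.cubeIncrement (a - Pi.single u 1) J = G.cubeIncrement a J - if u ∈ J then 1 else 0 := by
  simp only [cubeIncrement, Pi.sub_apply, Int.cast_sub, sum_sub_distrib, Pi.single_apply,
    Int.cast_ite, Int.cast_one, Int.cast_zero, sum_ite_eq']
  ring

section Leaf

variable (hx : x ∉ U) (hxu : ∀ w ∈ U, G.Adj x w ↔ w = u)
include hx hxu

lemma cubeIncrement_insert_of_unique_adj (hJ : J ⊆ U) :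
    G.cubeIncrement a (insert x J) = G.cubeIncrement (a - Pi.single u 1) J + (1 + a x) := by
  have hxJ : x ∉ J := fun h => hx (hJ h)
  rw [cubeIncrement_sub_single]
  unfold cubeIncrement
  rw [card_insert_of_notMem hxJ, sum_insert hxJ, sum_degreeIn_insert hxJ,
    degreeIn_of_subset_of_unique_adj hxu hJ]
  split_ifs <;> push_cast <;> ring

lemma cubeMaxIncrement_insert_of_unique_adj (hI : I ⊆ U) :
    G.cubeMaxIncrement a (insert x I) =
      G.cubeMaxIncrement a I ⊔ (G.cubeMaxIncrement (a - Pi.single u 1) I + (1 + a x)) := by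
  unfold cubeMaxIncrement
  rw [sup'_congr _ (powerset_insert I x) fun _ _ => rfl,
    sup'_union (powerset_nonempty I) ((powerset_nonempty I).image _), sup'_image,
    sup'_add _ _ _ (powerset_nonempty I)]
  congr 1
  exact sup'_congr _ rfl fun J hJ =>
    cubeIncrement_insert_of_unique_adj a hx hxu ((mem_powerset.1 hJ).trans hI)

lemma cubeMaxIncrement_insert_of_unique_adj_of_nonneg (hI : I ⊆ U) (ha : 0 ≤ a x) :
    G.cubeMaxIncrement a (insert x I) = G.cubeMaxIncrement (a - Pi.single u 1) I + (1 + a x) := by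
  rw [cubeMaxIncrement_insert_of_unique_adj a hx hxu hI, sup_eq_right]
  have hle : G.cubeMaxIncrement a I ≤ G.cubeMaxIncrement (a - Pi.single u 1) I + 1 := by
    unfold cubeMaxIncrement
    rw [sup'_add]
    refine sup'_mono_fun fun J _ => ?_
    rw [cubeIncrement_sub_single]
    split_ifs <;> linarith
  have : (0 : ℚ) ≤ a x := by exact_mod_cast ha
  linarith

lemma cubeMaxIncrement_insert_of_unique_adj_of_neg (hI : I ⊆ U) (ha : a x < 0) :
    G.cubeMaxIncrement a (insert x I) = G.cubeMaxIncrement a I := by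
  rw [cubeMaxIncrement_insert_of_unique_adj a hx hxu hI, sup_eq_left]
  have hle : G.cubeMaxIncrement (a - Pi.single u 1) I ≤ G.cubeMaxIncrement a I := by
    refine sup'_mono_fun fun J _ => ?_
    rw [cubeIncrement_sub_single]
    split_ifs <;> linarith
  have : (a x : ℚ) ≤ -1 := by exact_mod_cast (by omega : a x ≤ -1)
  linarith

lemma altCubeSum_insert_of_unique_adj (hU : U.Nonempty) :
    G.altCubeSum a (insert x U) =
      if 0 ≤ a x then G.altCubeSum a U - G.altCubeSum (a - Pi.single u 1) U else 0 := by
  have hsign : ∀ I ∈ U.powerset, (-1 : ℚ) ^ (#(insert x I) + 1) = -(-1) ^ (#I + 1) :=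
    fun I hI => by
      rw [card_insert_of_notMem fun h => hx (mem_powerset.1 hI h)]
      ring
  rw [altCubeSum, sum_powerset_insert hx, ← altCubeSum]
  split_ifs with ha
  · have h : ∀ I ∈ U.powerset,
        (-1 : ℚ) ^ (#(insert x I) + 1) * G.cubeMaxIncrement a (insert x I) =
          -((-1) ^ (#I + 1) * G.cubeMaxIncrement (a - Pi.single u 1) I) +
            (-1) ^ (#I + 1) * -(1 + a x) := fun I hI => by
      rw [hsign I hI, cubeMaxIncrement_insert_of_unique_adj_of_nonneg a hx hxu
        (mem_powerset.1 hI) ha]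
      ring
    rw [sum_congr rfl h, sum_add_distrib, sum_neg_distrib, ← sum_mul,
      sum_powerset_neg_one_pow_card_add_one hU, zero_mul, add_zero, ← altCubeSum]
    ring
  · have h : ∀ I ∈ U.powerset,
        (-1 : ℚ) ^ (#(insert x I) + 1) * G.cubeMaxIncrement a (insert x I) =
          -((-1) ^ (#I + 1) * G.cubeMaxIncrement a I) := fun I hI => by
      rw [hsign I hI, cubeMaxIncrement_insert_of_unique_adj_of_neg a hx hxu
        (mem_powerset.1 hI) (not_le.1 ha), neg_mul]
    rw [sum_congr rfl h, sum_neg_distrib, ← altCubeSum, add_neg_cancel]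

end Leaf

lemma altCubeSum_singleton (v : V) : G.altCubeSum a {v} = zetaCoeff 0 (a v) := by
  have hps : ({v} : Finset V).powerset = {∅, {v}} := by
    rw [← insert_empty_eq v, powerset_insert, powerset_empty]
    rfl
  simp [altCubeSum, cubeMaxIncrement, cubeIncrement, hps, degreeIn, filter_singleton, zetaCoeff,
    add_comm]

theorem Accreted.altCubeSum_eq_prod (hU : G.Accreted U)
    (htree : ∑ v ∈ U, G.degreeIn U v = 2 * (#U - 1)) (a : V → ℤ) :
    G.altCubeSum a U = ∏ v ∈ U, zetaCoeff (G.degreeIn U v) (a v) := by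
  induction hU generalizing a with
  | singleton v =>
    rw [altCubeSum_singleton, prod_singleton, degreeIn, filter_singleton, if_neg G.irrefl,
      card_empty]
  | @insert_adj U x hU hx hpos ih =>
    obtain ⟨hdeg, htreeU⟩ := hU.degreeIn_eq_one_of_sum_eq hx hpos htree
    obtain ⟨u, hu⟩ := card_eq_one.1 hdeg
    have hxu : ∀ w ∈ U, G.Adj x w ↔ w = u := fun w hw => by
      rw [← mem_singleton, ← hu, mem_filter, and_iff_right hw]
    have huU : u ∈ U := (mem_filter.1 (hu ▸ mem_singleton_self u)).1
    have hprod : ∏ v ∈ U, zetaCoeff (G.degreeIn (insert x U) v) (a v) =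
        ∏ v ∈ U, zetaCoeff (G.degreeIn U v + if v = u then 1 else 0) (a v) :=
      prod_congr rfl fun v hv => by simp only [degreeIn_insert hx, G.adj_comm v x, hxu v hv]
    rw [altCubeSum_insert_of_unique_adj a hx hxu hU.nonempty, ih htreeU, ih htreeU,
      prod_insert hx, degreeIn_insert_self hx, hdeg, hprod, prod_zetaCoeff_add_ite_eq_sub huU]
    split_ifs with ha
    · rw [zetaCoeff_one_of_nonneg ha, one_mul]
    · rw [zetaCoeff_of_neg 1 (not_le.1 ha), zero_mul]

end SimpleGraph

section Plumbing

variable {s : ℕ} {M : Matrix (Fin s) (Fin s) ℤ}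

lemma pairing_eq_toLinearMap₂' (M : Matrix (Fin s) (Fin s) ℤ) (x y : Fin s → ℚ) :
    pairing M x y = Matrix.toLinearMap₂' ℚ (intMatQ M) x y :=
  (Matrix.toLinearMap₂'_apply' _ _ _).symm

lemma pairing_baseE (M : Matrix (Fin s) (Fin s) ℤ) (v w : Fin s) :
    pairing M (baseE v) (baseE w) = M v w := by
  simp [pairing, baseE, intMatQ, single_dotProduct]

lemma pairing_comm (hM : M.IsSymm) (x y : Fin s → ℚ) : pairing M x y = pairing M y x := by
  have hQ : (intMatQ M)ᵀ = intMatQ M := by rw [intMatQ, ← Matrix.transpose_map, hM.eq]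
  rw [pairing, pairing, Matrix.dotProduct_mulVec, dotProduct_comm, ← Matrix.mulVec_transpose, hQ]

lemma wfun_add_two_smul (hM : M.IsSymm) (k E : Fin s → ℚ) :
    wfun M (k + 2 • E) = wfun M k - (pairing M k E + pairing M E E) / 2 := by
  have hcomm := pairing_comm hM E k
  simp only [wfun, pairing_eq_toLinearMap₂'] at hcomm ⊢
  simp only [map_add, map_nsmul, LinearMap.add_apply, LinearMap.smul_apply, hcomm]
  ring

lemma pairing_add_two_smul_antidual_baseE
    {Estar : Fin s → Fin s → ℚ} (hE : IsAntidual M Estar) {K : Fin s → ℚ} (hK : IsCanonical M K)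
    (a : Fin s → ℤ) (w : Fin s) :
    pairing M (K + 2 • ∑ v, (a v : ℚ) • Estar v) (baseE w) = -2 - M w w - 2 * a w := by
  have hKw : pairing M K (baseE w) = -2 - M w w := by
    have h := hK w
    rw [pairing_eq_toLinearMap₂', map_add, LinearMap.add_apply, ← pairing_eq_toLinearMap₂',
      ← pairing_eq_toLinearMap₂', pairing_baseE] at h
    linarith
  rw [pairing_eq_toLinearMap₂']
  simp only [map_add, map_nsmul, map_sum, map_smul, LinearMap.add_apply, LinearMap.smul_apply,
    LinearMap.sum_apply, ← pairing_eq_toLinearMap₂', hKw, hE _ w, smul_eq_mul, mul_ite, mul_neg,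
    mul_one, mul_zero, sum_ite_eq', if_pos (mem_univ w)]
  ring

def plumbingGraph (M : Matrix (Fin s) (Fin s) ℤ) : SimpleGraph (Fin s) :=
  SimpleGraph.fromRel fun v w => M v w = 1

instance (M : Matrix (Fin s) (Fin s) ℤ) : DecidableRel (plumbingGraph M).Adj := fun v w =>
  decidable_of_iff (v ≠ w ∧ (M v w = 1 ∨ M w v = 1))
    (SimpleGraph.fromRel_adj (fun v w => M v w = 1) v w).symm

lemma plumbingGraph_adj (hM : M.IsSymm) {v w : Fin s} :
    (plumbingGraph M).Adj v w ↔ v ≠ w ∧ M v w = 1 := by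
  rw [plumbingGraph, SimpleGraph.fromRel_adj, hM.apply w v, or_self]

lemma valency_eq_degreeIn (hM : M.IsSymm) (v : Fin s) :
    valency M v = (plumbingGraph M).degreeIn univ v := by
  simp only [valency, SimpleGraph.degreeIn, plumbingGraph_adj hM, ne_comm]

variable (hM : M.IsSymm) (hoff : ∀ v w, v ≠ w → M v w = 0 ∨ M v w = 1)
include hM hoff

lemma entry_eq_diagonal_add_adj (v w : Fin s) :
    (M v w : ℚ) =
      (if w = v then (M v v : ℚ) else 0) + if (plumbingGraph M).Adj v w then 1 else 0 := by
  rcases eq_or_ne w v with rfl | hne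
  · simp
  · rcases hoff v w hne.symm with h | h <;> simp [plumbingGraph_adj hM, hne, hne.symm, h]

lemma pairing_sum_baseE_self (J : Finset (Fin s)) :
    pairing M (∑ j ∈ J, baseE j) (∑ j ∈ J, baseE j) =
      ∑ v ∈ J, (M v v : ℚ) + (∑ v ∈ J, (plumbingGraph M).degreeIn J v : ℕ) := by
  have hrow : ∀ v ∈ J, ∑ w ∈ J, (M v w : ℚ) = M v v + (plumbingGraph M).degreeIn J v := by
    intro v hv
    rw [sum_congr rfl fun w _ => entry_eq_diagonal_add_adj hM hoff v w, sum_add_distrib,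
      sum_ite_eq', if_pos hv, sum_boole, SimpleGraph.degreeIn]
  rw [pairing_eq_toLinearMap₂']
  simp only [map_sum, LinearMap.sum_apply, ← pairing_eq_toLinearMap₂', pairing_baseE]
  rw [sum_comm, sum_congr rfl hrow, sum_add_distrib]
  push_cast
  rfl

lemma wfun_add_two_smul_sum_baseE {a : Fin s → ℤ} {k : Fin s → ℚ}
    (hk : ∀ w, pairing M k (baseE w) = -2 - M w w - 2 * a w) (J : Finset (Fin s)) :
    wfun M (k + 2 • ∑ j ∈ J, baseE j) = wfun M k + (plumbingGraph M).cubeIncrement a J := by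
  have hkJ : pairing M k (∑ j ∈ J, baseE j) = ∑ w ∈ J, (-2 - M w w - 2 * a w : ℚ) := by
    simp only [pairing_eq_toLinearMap₂', map_sum, ← hk]
  rw [wfun_add_two_smul hM, pairing_sum_baseE_self hM hoff, hkJ, SimpleGraph.cubeIncrement]
  simp only [sum_sub_distrib, sum_const, nsmul_eq_mul, ← mul_sum]
  ring

lemma cubeSum_eq_altCubeSum (hs : 1 ≤ s) {a : Fin s → ℤ} {k : Fin s → ℚ}
    (hk : ∀ w, pairing M k (baseE w) = -2 - M w w - 2 * a w) :
    cubeSum M k = (plumbingGraph M).altCubeSum a univ := by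
  have hcube : ∀ I, cubeW M k I = (plumbingGraph M).cubeMaxIncrement a I + wfun M k := fun I => by
    rw [cubeW, sup'_congr _ rfl fun J _ => wfun_add_two_smul_sum_baseE hM hoff hk J,
      SimpleGraph.cubeMaxIncrement, sup'_add]
    simp only [add_comm]
  have huniv : (univ : Finset (Fin s)).Nonempty := univ_nonempty_iff.2 ⟨⟨0, hs⟩⟩
  simp only [cubeSum, hcube, mul_add, sum_add_distrib, ← sum_mul,
    sum_powerset_neg_one_pow_card_add_one huniv, zero_mul, add_zero]
  rfl

end Plumbing

/-- Exponents `(k - K) / 2` are written as `∑ a_v E_v^*` in the antidual basis, and `Z` is the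
power series in the variables `x_v = t^{E_v^*}` determined by
`Z · ∏ (1 - x_v)² = ∏ (1 - x_v)^{δ_v}`. -/
theorem zeta_equals_weighted_cube_count
    (s : ℕ) (hs : 1 ≤ s) (I : Matrix (Fin s) (Fin s) ℤ)
    (htree : IsPlumbingTree I)
    (Estar : Fin s → Fin s → ℚ) (hE : IsAntidual I Estar)
    (K : Fin s → ℚ) (hK : IsCanonical I K)
    (Z : MvPowerSeries (Fin s) ℚ)
    (hZ : Z * ∏ v, (1 - MvPowerSeries.X v) ^ 2
            = ∏ v, (1 - MvPowerSeries.X v) ^ (valency I v)) :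
    ∀ a : Fin s → ℤ,
      cubeSum I (K + 2 • ∑ v, (a v : ℚ) • Estar v)
        = if ∀ v, 0 ≤ a v then
            MvPowerSeries.coeff
              (Finsupp.equivFunOnFinite.symm fun v => (a v).toNat) Z
          else 0 := by
  obtain ⟨⟨hsymm, -, hoff, hconn⟩, hval⟩ := htree
  intro a
  have htreeSum : ∑ v, (plumbingGraph I).degreeIn univ v = 2 * (#(univ : Finset (Fin s)) - 1) := by
    simpa only [valency_eq_degreeIn hsymm, card_univ, Fintype.card_fin] using hval
  rw [cubeSum_eq_altCubeSum hsymm hoff hs (pairing_add_two_smul_antidual_baseE hE hK a),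
    (SimpleGraph.Connected.accreted_univ (G := plumbingGraph I) hconn).altCubeSum_eq_prod htreeSum,
    eq_prod_rename_zetaFactor _ hZ, coeff_prod_rename_punit]
  simp only [← valency_eq_degreeIn hsymm, Finsupp.equivFunOnFinite_symm_apply_apply, zetaFactor,
    PowerSeries.coeff_mk]
  exact prod_zetaCoeff_eq_ite (valency I) a
end

section
/- Let Γ be a connected negative definite plumbing tree and k₁ ∈ Char with (k₁, E_v) ≤ e_v + 1 for all v (i.e. k₁ ∈ -K + strict Lipman cone). Then for any characteristic k in the same class with k > k₁, there exists a vertex v with E_v appearing in the support of k - k₁ such that w(k - 2E_v) ≤ w(k), where w(k) = -(k² + |V|)/8. -/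
open scoped BigOperators Matrix

lemma pairing_sum {s : ℕ} (M : Matrix (Fin s) (Fin s) ℤ) (x y : Fin s → ℚ) :
    pairing M x y = ∑ i, ∑ j, x i * (M i j : ℚ) * y j := by
  simp [pairing, intMatQ, Matrix.mulVec, dotProduct, Finset.mul_sum, mul_assoc]

lemma pairing_baseE_right {s : ℕ} (M : Matrix (Fin s) (Fin s) ℤ) (x : Fin s → ℚ) (v : Fin s) :
    pairing M x (baseE v) = ∑ i, x i * (M i v : ℚ) := by
  rw [pairing_sum]
  refine Finset.sum_congr rfl fun i _ => ?_
  simp [baseE, Pi.single_apply, mul_ite, Finset.sum_ite_eq']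

lemma pairing_symm {s : ℕ} {M : Matrix (Fin s) (Fin s) ℤ} (hsym : M.IsSymm)
    (x y : Fin s → ℚ) : pairing M x y = pairing M y x := by
  rw [pairing_sum, pairing_sum, Finset.sum_comm]
  refine Finset.sum_congr rfl fun i _ => Finset.sum_congr rfl fun j _ => ?_
  rw [hsym.apply i j]
  push_cast
  ring

lemma pairing_self_eq {s : ℕ} {M : Matrix (Fin s) (Fin s) ℤ} (hsym : M.IsSymm)
    (x : Fin s → ℚ) : pairing M x x = ∑ v, x v * pairing M x (baseE v) := by
  rw [pairing_sum, Finset.sum_comm]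
  refine Finset.sum_congr rfl fun v _ => ?_
  rw [pairing_baseE_right, Finset.mul_sum]
  exact Finset.sum_congr rfl fun i _ => by ring

lemma pairing_sub_left {s : ℕ} (M : Matrix (Fin s) (Fin s) ℤ) (x y z : Fin s → ℚ) :
    pairing M (x - y) z = pairing M x z - pairing M y z := by
  simp [pairing_sum, Finset.sum_sub_distrib, sub_mul]

lemma pairing_baseE_baseE {s : ℕ} (M : Matrix (Fin s) (Fin s) ℤ) (v : Fin s) :
    pairing M (baseE v) (baseE v) = (M v v : ℚ) := by
  rw [pairing_baseE_right]
  simp [baseE, Pi.single_apply, ite_mul, Finset.sum_ite_eq']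

lemma pairing_sub_right {s : ℕ} (M : Matrix (Fin s) (Fin s) ℤ) (x y z : Fin s → ℚ) :
    pairing M x (y - z) = pairing M x y - pairing M x z := by
  simp [pairing_sum, Finset.sum_sub_distrib, mul_sub]

lemma pairing_smul2_left {s : ℕ} (M : Matrix (Fin s) (Fin s) ℤ) (b y : Fin s → ℚ) :
    pairing M (2 • b) y = 2 * pairing M b y := by
  simp [pairing_sum, two_smul, add_mul, Finset.sum_add_distrib, Finset.mul_sum, two_mul]

lemma pairing_smul2_right {s : ℕ} (M : Matrix (Fin s) (Fin s) ℤ) (b y : Fin s → ℚ) :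
    pairing M y (2 • b) = 2 * pairing M y b := by
  simp [pairing_sum, two_smul, mul_add, Finset.sum_add_distrib, Finset.mul_sum, two_mul]

lemma wfun_step {s : ℕ} {M : Matrix (Fin s) (Fin s) ℤ} (hsym : M.IsSymm)
    (k : Fin s → ℚ) (v : Fin s) (h : pairing M k (baseE v) ≤ (M v v : ℚ)) :
    wfun M (k - 2 • baseE v) ≤ wfun M k := by
  have hexp : pairing M (k - 2 • baseE v) (k - 2 • baseE v)
      = pairing M k k - 4 * pairing M k (baseE v) + 4 * (M v v : ℚ) := by
    rw [pairing_sub_left, pairing_sub_right, pairing_sub_right, pairing_smul2_left,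
      pairing_smul2_right, pairing_smul2_right, pairing_symm hsym (baseE v) k,
      pairing_smul2_left, pairing_baseE_baseE]
    ring
  unfold wfun
  rw [hexp]
  linarith

/-- Proposition 2.5(a): if `k₁ ∈ Char` satisfies `(k₁, E_v) ≤ e_v + 1` for all `v`
and `k` is characteristic in the same class with `k > k₁`, then there is a vertex `v`
in the support of `k - k₁` with `w(k - 2E_v) ≤ w(k)`. -/
theorem exists_decreasing_vertex
    (s : ℕ) (I : Matrix (Fin s) (Fin s) ℤ)
    (hplumb : IsPlumbing I)
    (K : Fin s → ℚ) (hK : IsCanonical I K)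
    (k k₁ : Fin s → ℚ)
    (hk : IsChar I k) (hk₁ : IsChar I k₁)
    (hclass : ∃ l : Fin s → ℤ, k - k₁ = fun v => 2 * (l v : ℚ))
    (hLip : ∀ v, pairing I k₁ (baseE v) ≤ (I v v : ℚ) + 1)
    (hge : ∀ v, k₁ v ≤ k v) (hne : k ≠ k₁) :
    ∃ v, k₁ v < k v ∧ wfun I (k - 2 • baseE v) ≤ wfun I k := by
  obtain ⟨hsym, hnegdef, -, -⟩ := hplumb
  set x : Fin s → ℚ := k - k₁ with hx
  have hx0 : x ≠ 0 := sub_ne_zero.mpr hne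
  have hxx : pairing I x x < 0 := hnegdef x hx0
  have hsum : pairing I x x = ∑ v, x v * pairing I x (baseE v) := pairing_self_eq hsym x
  have : ∃ v ∈ Finset.univ, x v * pairing I x (baseE v) < 0 := by
    by_contra h
    push_neg at h
    have := Finset.sum_nonneg fun v hv => h v hv
    rw [← hsum] at this
    linarith
  obtain ⟨v, -, hv⟩ := this
  have hxv : 0 ≤ x v := by simp [hx, sub_nonneg, hge v]
  have hxvpos : 0 < x v := by
    rcases lt_or_eq_of_le hxv with h | h
    · exact h
    · exfalso; rw [← h] at hv; simp at hv
  have hcneg : pairing I x (baseE v) < 0 := by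
    by_contra h
    push_neg at h
    nlinarith
  -- integrality: pairing I x (baseE v) is an integer, hence ≤ -1
  obtain ⟨m, hm⟩ := hk.1 v
  obtain ⟨m₁, hm₁⟩ := hk₁.1 v
  have hxpair : pairing I x (baseE v) = pairing I k (baseE v) - pairing I k₁ (baseE v) :=
    pairing_sub_left I k k₁ (baseE v)
  have hint : pairing I x (baseE v) = ((m - m₁ : ℤ) : ℚ) := by
    rw [hxpair, hm, hm₁]; push_cast; ring
  have hle : pairing I x (baseE v) ≤ -1 := by
    rw [hint]
    rw [hint] at hcneg
    have : (m - m₁ : ℤ) < 0 := by exact_mod_cast hcneg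
    have : (m - m₁ : ℤ) ≤ -1 := by omega
    exact_mod_cast this
  refine ⟨v, ?_, ?_⟩
  · have : 0 < k v - k₁ v := hxvpos
    linarith
  · apply wfun_step hsym
    have : pairing I k (baseE v) = pairing I k₁ (baseE v) + pairing I x (baseE v) := by
      rw [hxpair]; ring
    rw [this]
    have := hLip v
    linarith
end
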